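/- Let u, w, w' ∈ W with w' ≤ w in Bruhat order. Then there exists v ∈ W with v ≤ u such that v w' ≤ u w. -/

import Mathlib

open CoxeterSystem

variable {B W : Type*} [Group W] {M : CoxeterMatrix B}

/-- The Bruhat order on `W`, via the subword property: `x ≤ y` iff some reduced word for `y`
has a sublist whose product is `x`. -/
def CoxeterSystem.bruhatLE (cs : CoxeterSystem M W) (x y : W) : Prop :=
  ∃ ω : List B, cs.IsReduced ω ∧ cs.wordProd ω = y ∧
    ∃ ω' : List B, ω'.Sublist ω ∧ cs.wordProd ω' = x

/-- The standard parabolic subgroup `W_J` of `W`, generated by `{sⱼ : j ∈ J}`. -/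
def CoxeterSystem.parab (cs : CoxeterSystem M W) (J : Set B) : Subgroup W :=
  Subgroup.closure (cs.simple '' J)

/-- `w ∈ W^J`: `w` has minimal length in the coset `w * W_J`. -/
def CoxeterSystem.IsMinRight (cs : CoxeterSystem M W) (J : Set B) (w : W) : Prop :=
  ∀ u ∈ cs.parab J, cs.length w ≤ cs.length (w * u)

/-- `w ∈ ᴶW`: `w` has minimal length in the coset `W_J * w`. -/
def CoxeterSystem.IsMinLeft (cs : CoxeterSystem M W) (J : Set B) (w : W) : Prop :=
  ∀ u ∈ cs.parab J, cs.length w ≤ cs.length (u * w)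

/-!
Induct on a reduced word for `u`: write `u = sᵢ u₁` with `ℓ u₁ < ℓ u`, and let `v₁ ≤ u₁` with
`v₁ w' ≤ u₁ w`. Both `v₁` and `sᵢ v₁` lie below `u`, and the lifting property
`x ≤ y → x ≤ sᵢ y ∨ sᵢ x ≤ sᵢ y`, applied to `v₁ w' ≤ u₁ w`, gives `v = v₁` or `v = sᵢ v₁`.

The lifting property needs the subword property for an arbitrary word of `y`, which goes
through the reflection-chain form of the Bruhat order and the strong exchange condition. The
latter holds because the parity of the number of occurrences of a reflection in the left
inversion sequence of a word depends only on the product of the word, as `W` acts on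
`W × ZMod 2`.
-/

open List

namespace CoxeterSystem

variable (cs : CoxeterSystem M W)

local prefix:100 "s" => cs.simple
local prefix:100 "π" => cs.wordProd
local prefix:100 "ℓ" => cs.length
local prefix:100 "lis" => cs.leftInvSeq

theorem simple_mul_mul_simple_eq_simple_iff {w : W} {i : B} : s i * w * s i = s i ↔ w = s i := by
  constructor
  · intro h
    simpa [mul_assoc, cs.simple_mul_simple_cancel_left] using congrArg (s i * · * s i) h
  · rintro rfl
    rw [cs.simple_mul_simple_self, one_mul]

theorem leftInvSeq_append (α β : List B) :
    lis (α ++ β) = lis α ++ (lis β).map (MulAut.conj (π α)) := by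
  induction α with
  | nil => simp
  | cons i α ih => simp [leftInvSeq, ih, wordProd_cons, Function.comp_def, mul_assoc]

section Parity

variable [DecidableEq W]

theorem count_leftInvSeq_append (α β : List B) (t : W) :
    (lis (α ++ β)).count t = (lis α).count t + (lis β).count ((π α)⁻¹ * t * π α) := by
  have hconj : MulAut.conj (π α) ((π α)⁻¹ * t * π α) = t := by simp [mul_assoc]
  rw [leftInvSeq_append, count_append,
    ← count_map_of_injective (lis β) _ (MulAut.conj (π α)).injective, hconj]

/-- The involutions `η_s` of Björner–Brenti, *Combinatorics of Coxeter groups*, §1.4. -/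
def parityPerm (i : B) : Equiv.Perm (W × ZMod 2) :=
  Function.Involutive.toPerm (fun p ↦ (s i * p.1 * s i, p.2 + if p.1 = s i then 1 else 0)) <| by
    rintro ⟨w, e⟩
    simp only [cs.simple_mul_mul_simple_eq_simple_iff, Prod.mk.injEq, add_assoc]
    refine ⟨by simp [mul_assoc, cs.simple_mul_simple_cancel_left], ?_⟩
    split_ifs <;> simp [show (1 : ZMod 2) + 1 = 0 by decide]

theorem prod_map_parityPerm (ω : List B) (x : W) (e : ZMod 2) :
    (ω.map cs.parityPerm).prod (x, e) =
      (π ω * x * (π ω)⁻¹, e + (lis ω).count (π ω * x * (π ω)⁻¹)) := by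
  induction ω with
  | nil => simp
  | cons i ω ih =>
    set y := π ω * x * (π ω)⁻¹
    have hy : π (i :: ω) * x * (π (i :: ω))⁻¹ = s i * y * s i := by
      simp [y, wordProd_cons, mul_assoc]
    have hcount : (lis (i :: ω)).count (s i * y * s i) =
        (lis ω).count y + if y = s i then 1 else 0 := by
      have hconj : MulAut.conj (s i) y = s i * y * s i := by simp
      rw [leftInvSeq, count_cons, ← hconj,
        count_map_of_injective _ _ (MulAut.conj (s i)).injective, hconj]
      simp only [beq_iff_eq, eq_comm (a := s i), cs.simple_mul_mul_simple_eq_simple_iff]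
    rw [map_cons, prod_cons, Equiv.Perm.mul_apply, ih, hy, hcount]
    push_cast
    rw [← add_assoc]
    rfl

theorem even_count_leftInvSeq_alternatingWord (i j : B) (t : W) :
    Even ((lis (alternatingWord i j (2 * M i j))).count t) := by
  have hperiod : (lis (alternatingWord i j (2 * M i j))).drop (M i j) =
      (lis (alternatingWord i j (2 * M i j))).take (M i j) := by
    refine ext_getElem (by simp; omega) fun k h₁ _ ↦ ?_
    simp only [length_drop, length_leftInvSeq, length_alternatingWord] at h₁
    have hdiv : ∀ n, (2 * n + 1) / 2 = n := by omega
    rw [getElem_drop, getElem_take, getElem_leftInvSeq_alternatingWord _ _ _ _ _ (by omega),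
      getElem_leftInvSeq_alternatingWord _ _ _ _ _ (by omega), prod_alternatingWord_eq_mul_pow,
      prod_alternatingWord_eq_mul_pow, hdiv, hdiv, pow_add]
    simp
  rw [← take_append_drop (M i j) (lis _), count_append, hperiod]
  exact ⟨_, rfl⟩

theorem isLiftable_parityPerm : M.IsLiftable cs.parityPerm := by
  intro i j
  have hword : ∀ n, (cs.parityPerm i * cs.parityPerm j) ^ n =
      ((alternatingWord i j (2 * n)).map cs.parityPerm).prod := by
    intro n
    induction n with
    | zero => simp [alternatingWord]
    | succ n ih =>
      rw [pow_succ', ih, show 2 * (n + 1) = 2 * n + 1 + 1 by ring, alternatingWord_succ',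
        alternatingWord_succ']
      simp [mul_assoc]
  have hprod : π (alternatingWord i j (2 * M i j)) = 1 := by
    simp [prod_alternatingWord_eq_mul_pow]
  ext ⟨x, e⟩ : 1
  obtain ⟨c, hc⟩ := cs.even_count_leftInvSeq_alternatingWord i j x
  rw [hword, prod_map_parityPerm, hprod, one_mul, inv_one, mul_one, hc]
  simp [CharTwo.add_self_eq_zero]

theorem lift_parityPerm_wordProd (ω : List B) :
    cs.lift ⟨cs.parityPerm, cs.isLiftable_parityPerm⟩ (π ω) = (ω.map cs.parityPerm).prod := by
  simp [wordProd, map_list_prod, map_map, Function.comp_def, lift_apply_simple]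

theorem natCast_count_leftInvSeq_eq {ω ω' : List B} (h : π ω = π ω') (t : W) :
    ((lis ω).count t : ZMod 2) = (lis ω').count t := by
  have key : ∀ ν : List B, π ν = π ω →
      cs.lift ⟨cs.parityPerm, cs.isLiftable_parityPerm⟩ (π ω) ((π ω)⁻¹ * t * π ω, 0) =
        (t, ((lis ν).count t : ZMod 2)) := by
    intro ν hν
    rw [← hν, lift_parityPerm_wordProd, prod_map_parityPerm]
    simp [mul_assoc]
  exact (Prod.ext_iff.mp ((key ω rfl).symm.trans (key ω' h.symm))).2

theorem natCast_count_leftInvSeq_palindrome (α : List B) (a : B) :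
    ((lis (α ++ a :: α.reverse)).count (π α * s a * (π α)⁻¹) : ZMod 2) = 1 := by
  have hconj : (π α)⁻¹ * (π α * s a * (π α)⁻¹) * π α = s a := by group
  have hcancel := cs.natCast_count_leftInvSeq_eq (ω := α ++ α.reverse) (ω' := [])
    (by simp [wordProd_append]) (π α * s a * (π α)⁻¹)
  rw [← singleton_append, count_leftInvSeq_append, count_leftInvSeq_append, hconj]
  rw [count_leftInvSeq_append, hconj] at hcancel
  simp only [wordProd_singleton, inv_simple, cs.simple_mul_simple_self, one_mul,
    leftInvSeq_singleton, count_singleton_self, leftInvSeq_nil, count_nil] at hcancel ⊢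
  push_cast at hcancel ⊢
  linear_combination hcancel

end Parity

theorem mem_leftInvSeq_of_isLeftInversion {ψ : List B} {t : W}
    (h : cs.IsLeftInversion (π ψ) t) : t ∈ lis ψ := by
  classical
  obtain ⟨ht, hlt⟩ := h
  have htt : t * t = 1 := ht.mul_self
  obtain ⟨v, a, htv⟩ := ht
  obtain ⟨α, rfl⟩ := cs.wordProd_surjective v
  obtain ⟨τ, hτ, hτψ⟩ := cs.exists_isReduced (t * π ψ)
  have hδ : π (α ++ a :: α.reverse) = t := by
    simp [htv, wordProd_append, wordProd_cons, mul_assoc]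
  have hψ : π ψ = π ((α ++ a :: α.reverse) ++ τ) := by
    rw [wordProd_append, hδ, ← hτψ, ← mul_assoc, htt, one_mul]
  have hτt : (lis τ).count t = 0 := count_eq_zero.mpr fun hmem ↦ by
    have := (cs.isLeftInversion_of_mem_leftInvSeq hτ hmem).2
    rw [← hτψ, ← mul_assoc, htt, one_mul] at this
    omega
  have hodd := cs.natCast_count_leftInvSeq_eq hψ t
  rw [count_leftInvSeq_append, hδ, inv_mul_cancel, one_mul, hτt, add_zero, htv,
    natCast_count_leftInvSeq_palindrome, ← htv] at hodd
  rw [← count_pos_iff, Nat.pos_iff_ne_zero]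
  intro h0
  simp [h0] at hodd

theorem exists_wordProd_eraseIdx_eq_mul {ψ : List B} {t : W}
    (h : cs.IsLeftInversion (π ψ) t) : ∃ j, π (ψ.eraseIdx j) = t * π ψ := by
  obtain ⟨j, hj, rfl⟩ := mem_iff_getElem.mp (cs.mem_leftInvSeq_of_isLeftInversion h)
  exact ⟨j, by rw [← getD_leftInvSeq_mul_wordProd, getD_eq_getElem]⟩

theorem isReduced_cons_iff {ω : List B} {i : B} :
    cs.IsReduced (i :: ω) ↔ cs.IsReduced ω ∧ ¬cs.IsLeftDescent (π ω) i := by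
  rw [not_isLeftDescent_iff]
  refine ⟨fun h ↦ ?_, fun ⟨hω, hi⟩ ↦ ?_⟩
  · have hω : cs.IsReduced ω := h.drop 1
    refine ⟨hω, ?_⟩
    have := h.eq
    rw [wordProd_cons, length_cons] at this
    rw [this, hω.eq]
  · change ℓ (π (i :: ω)) = (i :: ω).length
    rw [wordProd_cons, hi, hω.eq, length_cons]

def ReflStep (x y : W) : Prop := ∃ t, cs.IsReflection t ∧ y = t * x ∧ ℓ x < ℓ y

/-- The Bruhat order in its reflection-chain form. -/
def ChainLE : W → W → Prop := Relation.ReflTransGen cs.ReflStep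

theorem reflStep_simple_mul {x : W} {i : B} (hx : ¬cs.IsLeftDescent x i) :
    cs.ReflStep x (s i * x) :=
  ⟨s i, cs.isReflection_simple i, rfl, by rw [not_isLeftDescent_iff] at hx; omega⟩

theorem exists_sublist_of_chainLE {x y : W} (h : cs.ChainLE x y) {ψ : List B} (hψ : π ψ = y) :
    ∃ σ, σ.Sublist ψ ∧ π σ = x := by
  induction h generalizing ψ with
  | refl => exact ⟨ψ, Sublist.refl ψ, hψ⟩
  | @tail z _ _ hstep ih =>
    obtain ⟨t, ht, rfl, hlt⟩ := hstep
    have hψt : t * π ψ = z := by rw [hψ, ← mul_assoc, ht.mul_self, one_mul]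
    obtain ⟨j, hj⟩ := cs.exists_wordProd_eraseIdx_eq_mul ⟨ht, by rwa [hψt, hψ]⟩
    obtain ⟨σ, hσ, rfl⟩ := ih (hj.trans hψt)
    exact ⟨σ, hσ.trans (eraseIdx_sublist ψ j), rfl⟩

variable {cs} in
/-- Humphreys, *Reflection groups and Coxeter groups*, Prop. 5.9, for a single step. -/
theorem ReflStep.simple_mul_chainLE_or {x w : W} (h : cs.ReflStep x w) (i : B) :
    cs.ChainLE (s i * x) w ∨ cs.ChainLE (s i * x) (s i * w) := by
  obtain ⟨t, ht, rfl, hlt⟩ := h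
  by_cases hx : cs.IsLeftDescent x i
  · have hdown : cs.ReflStep (s i * x) x := by
      simpa [cs.simple_mul_simple_cancel_left] using
        cs.reflStep_simple_mul (x := s i * x) (i := i)
          (by rwa [← isLeftDescent_iff_not_isLeftDescent_mul])
    exact .inl ((Relation.ReflTransGen.single hdown).tail ⟨t, ht, rfl, hlt⟩)
  by_cases heq : s i * x = t * x
  · exact .inl (heq ▸ .refl)
  -- strong exchange in a reduced word `i :: ξ` for `s i * x` either shortens `w` or gives
  -- `w = s i * x`
  obtain ⟨ξ, hξ, rfl⟩ := cs.exists_isReduced x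
  have ht' : cs.IsReflection (s i * t * s i) := by simpa using ht.conj (s i)
  have hw : s i * (t * π ξ) = s i * t * s i * π (i :: ξ) := by
    simp [wordProd_cons, mul_assoc, cs.simple_mul_simple_cancel_left]
  refine .inr (.single ⟨s i * t * s i, ht', by rw [hw, wordProd_cons], ?_⟩)
  rw [hw, ← wordProd_cons]
  refine lt_of_le_of_ne (not_lt.mp fun hlt' ↦ ?_) (ht'.length_mul_right_ne _).symm
  obtain ⟨_ | j, hj⟩ := cs.exists_wordProd_eraseIdx_eq_mul ⟨ht', hlt'⟩
  · rw [eraseIdx_cons_zero, ← hw] at hj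
    apply heq
    conv_lhs => rw [hj]
    exact cs.simple_mul_simple_cancel_left i
  · rw [eraseIdx_cons_succ, wordProd_cons, ← hw, mul_right_inj] at hj
    have := cs.length_wordProd_le (ξ.eraseIdx j)
    rw [hj] at this
    have := length_eraseIdx_le ξ j
    rw [hξ.eq] at hlt
    omega

variable {cs} in
theorem ChainLE.simple_mul_chainLE_or {x w : W} (h : cs.ChainLE x w) (i : B) :
    cs.ChainLE (s i * x) w ∨ cs.ChainLE (s i * x) (s i * w) := by
  induction h with
  | refl => exact .inr .refl
  | tail _ hstep ih =>
    rcases ih with h | h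
    · exact .inl (h.tail hstep)
    · exact (hstep.simple_mul_chainLE_or i).imp h.trans h.trans

theorem chainLE_wordProd_of_sublist {ω σ : List B} (hω : cs.IsReduced ω) (hσ : σ.Sublist ω) :
    cs.ChainLE (π σ) (π ω) := by
  induction ω generalizing σ with
  | nil => rw [sublist_nil.mp hσ]; exact .refl
  | cons i ω ih =>
    obtain ⟨hω, hi⟩ := cs.isReduced_cons_iff.mp hω
    have hstep : cs.ReflStep (π ω) (π (i :: ω)) := cs.reflStep_simple_mul hi
    rcases sublist_cons_iff.mp hσ with hσ | ⟨σ, rfl, hσ'⟩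
    · exact (ih hω hσ).tail hstep
    · rcases (ih hω hσ').simple_mul_chainLE_or i with h | h
      · exact (h.tail hstep).trans (by rw [wordProd_cons])
      · rwa [wordProd_cons, wordProd_cons]

theorem exists_sublist_of_bruhatLE {x y : W} (h : cs.bruhatLE x y) {ψ : List B}
    (hψ : π ψ = y) : ∃ σ, σ.Sublist ψ ∧ π σ = x := by
  obtain ⟨ω, hω, rfl, σ, hσ, rfl⟩ := h
  exact cs.exists_sublist_of_chainLE (cs.chainLE_wordProd_of_sublist hω hσ) hψ

theorem bruhatLE_simple_mul_of_not_isLeftDescent {x y : W} {i : B} (h : cs.bruhatLE x y)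
    (hy : ¬cs.IsLeftDescent y i) : cs.bruhatLE x (s i * y) := by
  obtain ⟨ω, hω, rfl, σ, hσ, rfl⟩ := h
  exact ⟨i :: ω, cs.isReduced_cons_iff.mpr ⟨hω, hy⟩, wordProd_cons .., σ, hσ.cons i, rfl⟩

theorem simple_mul_bruhatLE_simple_mul_of_not_isLeftDescent {x y : W} {i : B}
    (h : cs.bruhatLE x y) (hy : ¬cs.IsLeftDescent y i) : cs.bruhatLE (s i * x) (s i * y) := by
  obtain ⟨ω, hω, rfl, σ, hσ, rfl⟩ := h
  exact ⟨i :: ω, cs.isReduced_cons_iff.mpr ⟨hω, hy⟩, wordProd_cons .., i :: σ, hσ.cons_cons i,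
    wordProd_cons ..⟩

theorem bruhatLE_simple_mul_or {x y : W} (h : cs.bruhatLE x y) (i : B) :
    cs.bruhatLE x (s i * y) ∨ cs.bruhatLE (s i * x) (s i * y) := by
  obtain ⟨ω, hω, hωy⟩ := cs.exists_isReduced (s i * y)
  have hy' : π (i :: ω) = y := by rw [wordProd_cons, ← hωy, cs.simple_mul_simple_cancel_left]
  obtain ⟨σ, hσ, rfl⟩ := cs.exists_sublist_of_bruhatLE h hy'
  rcases sublist_cons_iff.mp hσ with hσ | ⟨σ, rfl, hσ'⟩
  · exact .inl ⟨ω, hω, hωy.symm, σ, hσ, rfl⟩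
  · exact .inr ⟨ω, hω, hωy.symm, σ, hσ', by rw [wordProd_cons, cs.simple_mul_simple_cancel_left]⟩

end CoxeterSystem

/-- If `w' ≤ w`, then there exists `v ≤ u` with `v w' ≤ u w`. -/
theorem exists_le_mul_le_mul (cs : CoxeterSystem M W) (u w w' : W)
    (h : cs.bruhatLE w' w) :
    ∃ v : W, cs.bruhatLE v u ∧ cs.bruhatLE (v * w') (u * w) := by
  obtain ⟨ω, hω, rfl⟩ := cs.exists_isReduced u
  induction ω with
  | nil => exact ⟨1, ⟨[], hω, rfl, [], .slnil, rfl⟩, by simpa using h⟩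
  | cons i ω ih =>
    obtain ⟨hω, hi⟩ := cs.isReduced_cons_iff.mp hω
    obtain ⟨v, hv, hvw⟩ := ih hω
    rw [cs.wordProd_cons, mul_assoc]
    rcases cs.bruhatLE_simple_mul_or hvw i with h' | h'
    · exact ⟨v, cs.bruhatLE_simple_mul_of_not_isLeftDescent hv hi, h'⟩
    · exact ⟨cs.simple i * v, cs.simple_mul_bruhatLE_simple_mul_of_not_isLeftDescent hv hi,
        by rwa [mul_assoc]⟩
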